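/- arXiv:1908.06053 — 3 statements merged into one kernel-verified Lean document; each statement's English description precedes it below -/
import Mathlib

section
/- Let Q, P be as above (x_Q < x_P, t_Q > t_P) and let e be a point in the interior of the sliding triangle T(P) of QP. Let A be the intersection of the vertical line through e with segment QP and B the intersection of the horizontal line through e with segment QP. Then for any point P* strictly between A and B on the segment QP, neither the sliding triangle of the sub-segment QP* nor the sliding triangle of the sub-segment P*P contains e. -/
set_option maxHeartbeats 800000


/-- The sliding triangle of an up-arc from `A` to `B`. -/
def slidingTriangle (A B : ℝ × ℝ) : Set (ℝ × ℝ) :=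
  convexHull ℝ {A, B, (B.1, A.2)}

/-- Let `e` be strictly inside the sliding triangle of the up-arc `QP`, let `A` be the
intersection of the vertical line through `e` with the segment `QP`, and `B` the
intersection of the horizontal line through `e` with `QP`.  Then for any `P*` strictly
between `A` and `B` on the segment, neither the sliding triangle of `QP*` nor that of
`P*P` contains `e`. -/
theorem stmt_2 (Q P e A B : ℝ × ℝ) (hx : Q.1 < P.1) (ht : P.2 < Q.2)
    (he : e ∈ interior (slidingTriangle Q P))
    (hA : A ∈ segment ℝ Q P) (hAe : A.1 = e.1)
    (hB : B ∈ segment ℝ Q P) (hBe : B.2 = e.2)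
    (Pstar : ℝ × ℝ) (hPstar : Pstar ∈ openSegment ℝ A B) :
    e ∉ slidingTriangle Q Pstar ∧ e ∉ slidingTriangle Pstar P := by
  have hb0 : (0:ℝ) < P.1 - Q.1 := by linarith
  have ha0 : (0:ℝ) < Q.2 - P.2 := by linarith
  have hlin : IsLinearMap ℝ (fun p : ℝ × ℝ => p.2 * (P.1 - Q.1) + p.1 * (Q.2 - P.2)) := by
    constructor <;> intros <;> simp <;> ring
  -- the sliding triangle lies in a halfspace bounded by the line QP
  have hsub : slidingTriangle Q P ⊆
      {p : ℝ × ℝ | Q.2 * (P.1 - Q.1) + Q.1 * (Q.2 - P.2) ≤ p.2 * (P.1 - Q.1) + p.1 * (Q.2 - P.2)} := by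
    apply convexHull_min _ (convex_halfSpace_ge hlin _)
    intro p hp
    simp only [Set.mem_insert_iff, Set.mem_singleton_iff] at hp
    simp only [Set.mem_setOf_eq]
    rcases hp with h | h | h
    · rw [h]
    · rw [h]; nlinarith
    · rw [h]
      show _ ≤ Q.2 * (P.1 - Q.1) + P.1 * (Q.2 - P.2)
      nlinarith [mul_pos hb0 ha0]
  -- e satisfies the strict inequality
  rw [mem_interior_iff_mem_nhds, Metric.mem_nhds_iff] at he
  obtain ⟨ε, hε, hball⟩ := he
  obtain ⟨δ, hδ0, hδε⟩ : ∃ δ : ℝ, 0 < δ ∧ δ * (2 * ((Q.2 - P.2) + (P.1 - Q.1))) = ε := by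
    refine ⟨ε / (2 * ((Q.2 - P.2) + (P.1 - Q.1))), div_pos hε (by linarith), ?_⟩
    field_simp
  have hw : ((e.1 - δ * (Q.2 - P.2), e.2 - δ * (P.1 - Q.1)) : ℝ × ℝ) ∈ Metric.ball e ε := by
    rw [Metric.mem_ball, Prod.dist_eq, max_lt_iff]
    constructor
    · rw [Real.dist_eq, show e.1 - δ * (Q.2 - P.2) - e.1 = -(δ * (Q.2 - P.2)) by ring,
        abs_neg, abs_of_pos (by positivity)]
      nlinarith [mul_pos hδ0 hb0]
    · rw [Real.dist_eq, show e.2 - δ * (P.1 - Q.1) - e.2 = -(δ * (P.1 - Q.1)) by ring,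
        abs_neg, abs_of_pos (by positivity)]
      nlinarith [mul_pos hδ0 ha0]
  have hwm := hsub (hball hw)
  simp only [Set.mem_setOf_eq] at hwm
  have hkey : Q.2 * (P.1 - Q.1) + Q.1 * (Q.2 - P.2)
      < e.2 * (P.1 - Q.1) + e.1 * (Q.2 - P.2) := by
    nlinarith [mul_pos hδ0 (mul_pos ha0 ha0), mul_pos hδ0 (mul_pos hb0 hb0)]
  clear hwm hw hδε hball hsub hlin
  -- coordinates of A and B
  obtain ⟨s, t, hs, ht', hst, hAeq⟩ := hA
  obtain ⟨s', t', hs', ht'', hst', hBeq⟩ := hB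
  rw [Prod.ext_iff] at hAeq hBeq
  simp only [Prod.fst_add, Prod.snd_add, Prod.smul_fst, Prod.smul_snd, smul_eq_mul] at hAeq hBeq
  obtain ⟨hA1e, hA2e⟩ := hAeq
  obtain ⟨hB1e, hB2e⟩ := hBeq
  have hlineA : A.2 * (P.1 - Q.1) + A.1 * (Q.2 - P.2)
      = Q.2 * (P.1 - Q.1) + Q.1 * (Q.2 - P.2) := by
    linear_combination (-(P.1 - Q.1)) * hA2e + (-(Q.2 - P.2)) * hA1e
      + (Q.2 * P.1 - Q.1 * P.2) * hst
  have hlineB : B.2 * (P.1 - Q.1) + B.1 * (Q.2 - P.2)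
      = Q.2 * (P.1 - Q.1) + Q.1 * (Q.2 - P.2) := by
    linear_combination (-(P.1 - Q.1)) * hB2e + (-(Q.2 - P.2)) * hB1e
      + (Q.2 * P.1 - Q.1 * P.2) * hst'
  have heA : e.1 * (Q.2 - P.2) = A.1 * (Q.2 - P.2) := by rw [hAe]
  have heB : e.2 * (P.1 - Q.1) = B.2 * (P.1 - Q.1) := by rw [hBe]
  have hA2 : A.2 < e.2 := by
    by_contra h
    push_neg at h
    nlinarith [mul_le_mul_of_nonneg_right h hb0.le]
  have hB1 : B.1 < e.1 := by
    by_contra h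
    push_neg at h
    nlinarith [mul_le_mul_of_nonneg_right h ha0.le]
  have hs'1 : s' = 1 - t' := by linarith
  rw [hs'1] at hB1e
  have ht1 : t = 1 - s := by linarith
  rw [ht1] at hA2e
  have hQ1B : Q.1 ≤ B.1 := by
    have h1 : B.1 - Q.1 = t' * (P.1 - Q.1) := by linear_combination -hB1e
    linarith [mul_nonneg ht'' hb0.le]
  have hP2A : P.2 ≤ A.2 := by
    have h1 : A.2 - P.2 = s * (Q.2 - P.2) := by linear_combination -hA2e
    linarith [mul_nonneg hs ha0.le]
  -- coordinates of Pstar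
  obtain ⟨u, v, hu, hv, huv, hPeq⟩ := hPstar
  rw [Prod.ext_iff] at hPeq
  simp only [Prod.fst_add, Prod.snd_add, Prod.smul_fst, Prod.smul_snd, smul_eq_mul] at hPeq
  obtain ⟨hPeq1, hPeq2⟩ := hPeq
  rw [hAe] at hPeq1
  rw [hBe] at hPeq2
  have hu1 : u = 1 - v := by linarith
  rw [hu1] at hPeq1
  have hv1 : v = 1 - u := by linarith
  rw [hv1] at hPeq2
  have hP1 : Pstar.1 < e.1 := by
    have h1 : e.1 - Pstar.1 = v * (e.1 - B.1) := by linear_combination hPeq1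
    linarith [mul_pos hv (show (0:ℝ) < e.1 - B.1 by linarith)]
  have hP2 : Pstar.2 < e.2 := by
    have h1 : e.2 - Pstar.2 = u * (e.2 - A.2) := by linear_combination hPeq2
    linarith [mul_pos hu (show (0:ℝ) < e.2 - A.2 by linarith)]
  have hflin : IsLinearMap ℝ (fun p : ℝ × ℝ => p.1) := by constructor <;> intros <;> simp
  have hslin : IsLinearMap ℝ (fun p : ℝ × ℝ => p.2) := by constructor <;> intros <;> simp
  constructor
  · intro hmem
    have hss : slidingTriangle Q Pstar ⊆ {p : ℝ × ℝ | p.1 < e.1} := by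
      apply convexHull_min _ (convex_halfSpace_lt hflin _)
      intro p hp
      simp only [Set.mem_insert_iff, Set.mem_singleton_iff] at hp
      simp only [Set.mem_setOf_eq]
      rcases hp with h | h | h
      · rw [h]; linarith
      · rw [h]; exact hP1
      · rw [h]; show Pstar.1 < e.1; exact hP1
    exact absurd (hss hmem) (by simp)
  · intro hmem
    have hss : slidingTriangle Pstar P ⊆ {p : ℝ × ℝ | p.2 < e.2} := by
      apply convexHull_min _ (convex_halfSpace_lt hslin _)
      intro p hp
      simp only [Set.mem_insert_iff, Set.mem_singleton_iff] at hp
      simp only [Set.mem_setOf_eq]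
      rcases hp with h | h | h
      · rw [h]; exact hP2
      · rw [h]; linarith
      · rw [h]; show Pstar.2 < e.2; exact hP2
    exact absurd (hss hmem) (by simp)
end

section
/- Let Q, P be as above and suppose two distinct points e1, e2 lie in the interior of the sliding triangle T(P) of the up-arc QP. Then there exist two points P1, P2 strictly between Q and P on segment QP, with P1 strictly between Q and P2, such that none of the sliding triangles of the three sub-segments QP1, P1P2, P2P contains e1 or e2. -/
lemma tri_subset {A B : ℝ × ℝ} {s : Set (ℝ × ℝ)} (hs : Convex ℝ s)
    (hA : A ∈ s) (hB : B ∈ s) (hC : ((B.1, A.2) : ℝ × ℝ) ∈ s) :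
    slidingTriangle A B ⊆ s :=
  convexHull_min (by simp [Set.insert_subset_iff, hA, hB, hC]) hs

lemma fst_linear : IsLinearMap ℝ (fun p : ℝ × ℝ => p.1) := ⟨fun _ _ => rfl, fun _ _ => rfl⟩
lemma snd_linear : IsLinearMap ℝ (fun p : ℝ × ℝ => p.2) := ⟨fun _ _ => rfl, fun _ _ => rfl⟩

lemma notMem_of_lt_left {A B e : ℝ × ℝ} (hAB : A.1 ≤ B.1) (h : e.1 < A.1) :
    e ∉ slidingTriangle A B := by
  intro hm
  have := tri_subset (A := A) (B := B) (s := {w : ℝ × ℝ | A.1 ≤ w.1})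
    (convex_halfSpace_ge fst_linear A.1) (by simp) (by simpa using hAB) (by simpa using hAB) hm
  simp only [Set.mem_setOf_eq] at this
  linarith

lemma notMem_of_gt_right {A B e : ℝ × ℝ} (hAB : A.1 ≤ B.1) (h : B.1 < e.1) :
    e ∉ slidingTriangle A B := by
  intro hm
  have := tri_subset (A := A) (B := B) (s := {w : ℝ × ℝ | w.1 ≤ B.1})
    (convex_halfSpace_le fst_linear B.1) (by simpa using hAB) (by simp) (by simp) hm
  simp only [Set.mem_setOf_eq] at this
  linarith

lemma notMem_of_gt_top {A B e : ℝ × ℝ} (hBA : B.2 ≤ A.2) (h : A.2 < e.2) :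
    e ∉ slidingTriangle A B := by
  intro hm
  have := tri_subset (A := A) (B := B) (s := {w : ℝ × ℝ | w.2 ≤ A.2})
    (convex_halfSpace_le snd_linear A.2) (by simp) (by simpa using hBA) (by simp) hm
  simp only [Set.mem_setOf_eq] at this
  linarith

lemma interior_facts {Q P e : ℝ × ℝ} (hx : Q.1 < P.1) (ht : P.2 < Q.2)
    (he : e ∈ interior (slidingTriangle Q P)) :
    Q.1 < e.1 ∧ e.1 < P.1 ∧ e.2 < Q.2 ∧
    (Q.2 - e.2) * (P.1 - Q.1) < (e.1 - Q.1) * (Q.2 - P.2) := by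
  rcases Metric.mem_nhds_iff.mp (mem_interior_iff_mem_nhds.mp he) with ⟨ε, εpos, hball⟩
  have hd : ∀ d : ℝ, |d| ≤ ε/2 → ∀ d' : ℝ, |d'| ≤ ε/2 →
      ((e.1 + d, e.2 + d') : ℝ × ℝ) ∈ slidingTriangle Q P := by
    intro d hdle d' hd'le
    apply hball
    rw [Metric.mem_ball, Prod.dist_eq]
    simp only [Real.dist_eq, add_sub_cancel_left]
    calc max |d| |d'| ≤ ε/2 := max_le hdle hd'le
      _ < ε := by linarith
  have habs : |ε/2| ≤ ε/2 := by rw [abs_of_pos (by linarith)]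
  have h0 : |(0:ℝ)| ≤ ε/2 := by simp; linarith
  have hR := tri_subset (A := Q) (B := P) (s := {w : ℝ × ℝ | w.1 ≤ P.1})
    (convex_halfSpace_le fst_linear P.1) (by simpa using hx.le) (by simp) (by simp)
    (hd (ε/2) habs 0 h0)
  have hL := tri_subset (A := Q) (B := P) (s := {w : ℝ × ℝ | Q.1 ≤ w.1})
    (convex_halfSpace_ge fst_linear Q.1) (by simp) (by simpa using hx.le) (by simpa using hx.le)
    (hd (-(ε/2)) (by simpa using habs) 0 h0)
  have hT := tri_subset (A := Q) (B := P) (s := {w : ℝ × ℝ | w.2 ≤ Q.2})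
    (convex_halfSpace_le snd_linear Q.2) (by simp) (by simpa using ht.le) (by simp)
    (hd 0 h0 (ε/2) habs)
  have hlin : IsLinearMap ℝ (fun w : ℝ × ℝ => w.2 * (P.1 - Q.1) - w.1 * (P.2 - Q.2)) := by
    constructor
    · intro x y; simp [Prod.fst_add, Prod.snd_add]; ring
    · intro c x; simp [Prod.smul_fst, Prod.smul_snd, smul_eq_mul]; ring
  have hLine := tri_subset (A := Q) (B := P)
    (s := {w : ℝ × ℝ | Q.2 * (P.1 - Q.1) - Q.1 * (P.2 - Q.2) ≤ w.2 * (P.1 - Q.1) - w.1 * (P.2 - Q.2)})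
    (convex_halfSpace_ge hlin _)
    (by simp) (by simp only [Set.mem_setOf_eq]; nlinarith) (by simp only [Set.mem_setOf_eq]; nlinarith)
    (hd 0 h0 (-(ε/2)) (by simpa using habs))
  simp only [Set.mem_setOf_eq] at hR hL hT hLine
  refine ⟨by linarith, by linarith, by linarith, by nlinarith⟩

noncomputable def pt (Q P : ℝ × ℝ) (s : ℝ) : ℝ × ℝ :=
  (Q.1 + s * (P.1 - Q.1), Q.2 + s * (P.2 - Q.2))

lemma pt_mem_open (Q P : ℝ × ℝ) {s : ℝ} (h0 : 0 < s) (h1 : s < 1) :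
    pt Q P s ∈ openSegment ℝ Q P := by
  refine ⟨1 - s, s, by linarith, h0, by ring, ?_⟩
  rw [Prod.ext_iff]
  constructor <;> simp [pt, Prod.smul_fst, Prod.smul_snd, smul_eq_mul] <;> ring

lemma pt_mem_open' (Q P : ℝ × ℝ) {s₁ s₂ : ℝ} (h0 : 0 < s₁) (h : s₁ < s₂) :
    pt Q P s₁ ∈ openSegment ℝ Q (pt Q P s₂) := by
  have hs₂ : 0 < s₂ := h0.trans h
  refine ⟨1 - s₁/s₂, s₁/s₂, by rw [sub_pos]; exact (div_lt_one hs₂).mpr h,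
    div_pos h0 hs₂, by ring, ?_⟩
  rw [Prod.ext_iff]
  constructor <;> simp [pt, Prod.smul_fst, Prod.smul_snd, smul_eq_mul] <;> field_simp <;> ring

/-- Key helper: assuming `e₁.1 ≤ e₂.1` -/
lemma helper (Q P e₁ e₂ : ℝ × ℝ) (hx : Q.1 < P.1) (ht : P.2 < Q.2)
    (he₁ : e₁ ∈ interior (slidingTriangle Q P))
    (he₂ : e₂ ∈ interior (slidingTriangle Q P)) (hle : e₁.1 ≤ e₂.1) :
    ∃ P₁ ∈ openSegment ℝ Q P, ∃ P₂ ∈ openSegment ℝ Q P,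
      P₁ ∈ openSegment ℝ Q P₂ ∧
      e₁ ∉ slidingTriangle Q P₁ ∧ e₁ ∉ slidingTriangle P₁ P₂ ∧ e₁ ∉ slidingTriangle P₂ P ∧
      e₂ ∉ slidingTriangle Q P₁ ∧ e₂ ∉ slidingTriangle P₁ P₂ ∧ e₂ ∉ slidingTriangle P₂ P := by
  obtain ⟨hL1, hR1, hT1, hLine1⟩ := interior_facts hx ht he₁
  obtain ⟨hL2, hR2, hT2, hLine2⟩ := interior_facts hx ht he₂
  set D := P.1 - Q.1 with hD
  set E := Q.2 - P.2 with hE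
  have hDpos : 0 < D := by simp [hD]; linarith
  have hEpos : 0 < E := by simp [hE]; linarith
  set sx1 := (e₁.1 - Q.1) / D with hsx1
  set sx2 := (e₂.1 - Q.1) / D with hsx2
  set st1 := (Q.2 - e₁.2) / E with hst1
  set st2 := (Q.2 - e₂.2) / E with hst2
  have hsx1D : sx1 * D = e₁.1 - Q.1 := div_mul_cancel₀ _ hDpos.ne'
  have hsx2D : sx2 * D = e₂.1 - Q.1 := div_mul_cancel₀ _ hDpos.ne'
  have hst1E : st1 * E = Q.2 - e₁.2 := div_mul_cancel₀ _ hEpos.ne'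
  have hst2E : st2 * E = Q.2 - e₂.2 := div_mul_cancel₀ _ hEpos.ne'
  have hst1pos : 0 < st1 := div_pos (by linarith) hEpos
  have hst2pos : 0 < st2 := div_pos (by linarith) hEpos
  have hstx1 : st1 < sx1 := (div_lt_div_iff₀ hEpos hDpos).mpr (by nlinarith)
  have hstx2 : st2 < sx2 := (div_lt_div_iff₀ hEpos hDpos).mpr (by nlinarith)
  have hsx1lt : sx1 < 1 := (div_lt_one hDpos).mpr (by linarith)
  have hsx2lt : sx2 < 1 := (div_lt_one hDpos).mpr (by linarith)
  have hsxle : sx1 ≤ sx2 := by rw [hsx1, hsx2]; gcongr <;> linarith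
  -- coordinate computations
  have ptf : ∀ s : ℝ, (pt Q P s).1 = Q.1 + s * D := fun s => rfl
  have pts : ∀ s : ℝ, (pt Q P s).2 = Q.2 - s * E := fun s => by
    show Q.2 + s * (P.2 - Q.2) = Q.2 - s * E; rw [hE]; ring
  have fst_lt : ∀ {s : ℝ} {e : ℝ × ℝ}, s < (e.1 - Q.1)/D → (pt Q P s).1 < e.1 := by
    intro s e h
    rw [ptf]
    have := mul_lt_mul_of_pos_right h hDpos
    rw [div_mul_cancel₀ _ hDpos.ne'] at this
    linarith
  have fst_gt : ∀ {s : ℝ} {e : ℝ × ℝ}, (e.1 - Q.1)/D < s → e.1 < (pt Q P s).1 := by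
    intro s e h
    rw [ptf]
    have := mul_lt_mul_of_pos_right h hDpos
    rw [div_mul_cancel₀ _ hDpos.ne'] at this
    linarith
  have snd_lt : ∀ {s : ℝ} {e : ℝ × ℝ}, (Q.2 - e.2)/E < s → (pt Q P s).2 < e.2 := by
    intro s e h
    rw [pts]
    have := mul_lt_mul_of_pos_right h hEpos
    rw [div_mul_cancel₀ _ hEpos.ne'] at this
    linarith
  have fst_mono : ∀ {s s' : ℝ}, s ≤ s' → (pt Q P s).1 ≤ (pt Q P s').1 := by
    intro s s' h
    rw [ptf, ptf]
    have := mul_le_mul_of_nonneg_right h hDpos.le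
    linarith
  have snd_anti : ∀ {s s' : ℝ}, s ≤ s' → (pt Q P s').2 ≤ (pt Q P s).2 := by
    intro s s' h
    rw [pts, pts]
    have := mul_le_mul_of_nonneg_right h hEpos.le
    linarith
  have fstQ : ∀ {s : ℝ}, 0 ≤ s → Q.1 ≤ (pt Q P s).1 := by
    intro s h; rw [ptf]
    have := mul_nonneg h hDpos.le
    linarith
  have fstP : ∀ {s : ℝ}, s ≤ 1 → (pt Q P s).1 ≤ P.1 := by
    intro s h; rw [ptf]
    have := mul_le_mul_of_nonneg_right h hDpos.le
    rw [one_mul] at this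
    rw [hD] at this ⊢
    linarith
  have sndP : ∀ {s : ℝ}, s ≤ 1 → P.2 ≤ (pt Q P s).2 := by
    intro s h; rw [pts]
    have := mul_le_mul_of_nonneg_right h hEpos.le
    rw [one_mul] at this
    rw [hE] at this ⊢
    linarith
  rcases lt_or_ge st2 sx1 with hc | hc
  · -- both handled by one threshold s₁
    set s₁ := (max st1 st2 + sx1) / 2 with hs₁
    set s₂ := (s₁ + 1) / 2 with hs₂
    have hmax : max st1 st2 < sx1 := max_lt hstx1 hc
    have h1 : 0 < s₁ := by rw [hs₁]; linarith [le_max_left st1 st2]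
    have h1x : s₁ < sx1 := by rw [hs₁]; linarith
    have h12 : s₁ < s₂ := by rw [hs₂]; linarith [h1x.trans hsx1lt]
    have h21 : s₂ < 1 := by rw [hs₂]; linarith [h1x.trans hsx1lt]
    have hst1s : st1 < s₁ := by rw [hs₁]; linarith [le_max_left st1 st2]
    have hst2s : st2 < s₁ := by rw [hs₁]; linarith [le_max_right st1 st2]
    refine ⟨pt Q P s₁, pt_mem_open Q P h1 (h12.trans h21), pt Q P s₂,
      pt_mem_open Q P (h1.trans h12) h21, pt_mem_open' Q P h1 h12, ?_, ?_, ?_, ?_, ?_, ?_⟩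
    · exact notMem_of_gt_right (fstQ h1.le) (fst_lt h1x)
    · exact notMem_of_gt_top (snd_anti h12.le) (snd_lt hst1s)
    · exact notMem_of_gt_top (sndP h21.le) (snd_lt (hst1s.trans h12))
    · exact notMem_of_gt_right (fstQ h1.le) (fst_lt (h1x.trans_le hsxle))
    · exact notMem_of_gt_top (snd_anti h12.le) (snd_lt hst2s)
    · exact notMem_of_gt_top (sndP h21.le) (snd_lt (hst2s.trans h12))
  · -- sx1 ≤ st2 < sx2
    set s₁ := (st1 + sx1) / 2 with hs₁
    set s₂ := (st2 + sx2) / 2 with hs₂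
    have h1 : 0 < s₁ := by rw [hs₁]; linarith
    have h1x : s₁ < sx1 := by rw [hs₁]; linarith
    have hst1s : st1 < s₁ := by rw [hs₁]; linarith
    have h2x : s₂ < sx2 := by rw [hs₂]; linarith
    have hst2s : st2 < s₂ := by rw [hs₂]; linarith
    have h12 : s₁ < s₂ := by calc s₁ < sx1 := h1x
                                _ ≤ st2 := hc
                                _ < s₂ := hst2s
    have h21 : s₂ < 1 := h2x.trans hsx2lt
    have hx1s2 : sx1 < s₂ := lt_of_le_of_lt hc hst2s
    refine ⟨pt Q P s₁, pt_mem_open Q P h1 (h12.trans h21), pt Q P s₂,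
      pt_mem_open Q P (h1.trans h12) h21, pt_mem_open' Q P h1 h12, ?_, ?_, ?_, ?_, ?_, ?_⟩
    · exact notMem_of_gt_right (fstQ h1.le) (fst_lt h1x)
    · exact notMem_of_gt_top (snd_anti h12.le) (snd_lt hst1s)
    · exact notMem_of_lt_left (fstP h21.le) (fst_gt hx1s2)
    · exact notMem_of_gt_right (fstQ h1.le) (fst_lt (h1x.trans_le hsxle))
    · exact notMem_of_gt_right (fst_mono h12.le) (fst_lt h2x)
    · exact notMem_of_gt_top (sndP h21.le) (snd_lt hst2s)

/-- If two distinct points `e₁, e₂` lie strictly inside the sliding triangle of the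
up-arc `QP`, then there are two subdivision points `P₁, P₂` strictly between `Q` and `P`
on the segment, with `P₁` strictly between `Q` and `P₂`, such that none of the sliding
triangles of the three sub-segments `QP₁`, `P₁P₂`, `P₂P` contains `e₁` or `e₂`. -/
theorem stmt_3 (Q P e₁ e₂ : ℝ × ℝ) (hx : Q.1 < P.1) (ht : P.2 < Q.2)
    (he₁ : e₁ ∈ interior (slidingTriangle Q P))
    (he₂ : e₂ ∈ interior (slidingTriangle Q P)) (hne : e₁ ≠ e₂) :
    ∃ P₁ ∈ openSegment ℝ Q P, ∃ P₂ ∈ openSegment ℝ Q P,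
      P₁ ∈ openSegment ℝ Q P₂ ∧
      e₁ ∉ slidingTriangle Q P₁ ∧ e₁ ∉ slidingTriangle P₁ P₂ ∧ e₁ ∉ slidingTriangle P₂ P ∧
      e₂ ∉ slidingTriangle Q P₁ ∧ e₂ ∉ slidingTriangle P₁ P₂ ∧ e₂ ∉ slidingTriangle P₂ P := by
  rcases le_total e₁.1 e₂.1 with h | h
  · exact helper Q P e₁ e₂ hx ht he₁ he₂ h
  · obtain ⟨P₁, hP₁, P₂, hP₂, h12, a1, a2, a3, b1, b2, b3⟩ := helper Q P e₂ e₁ hx ht he₂ he₁ h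
    exact ⟨P₁, hP₁, P₂, hP₂, h12, b1, b2, b3, a1, a2, a3⟩
end

section
/- Let A = (x_A, t_A), B = (x_B, t_B) with x_A < x_B and t_A > t_B, and let A' = (x_{A'}, t_{A'}), B' = (x_{B'}, t_{B'}) with x_{A'} < x_{B'} and t_{A'} > t_{B'}. Suppose the distance from A to A' is greater than 2ε, |AB| ≤ ε, and |A'B'| ≤ ε. Then the sliding triangles of segments AB and A'B' (the convex hulls of {A, B, (x_B, t_A)} and {A', B', (x_{B'}, t_{A'})} respectively) are disjoint. -/
/-! Each sliding triangle lies in the closed disk of radius `|AB|` around its lower vertex `A`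
(the disk is convex and contains the three vertices), so a point common to two sliding triangles
of mesh `ε` would put their lower vertices within `2ε` of each other. -/

/-- Euclidean distance on the `(x,t)`-plane `ℝ × ℝ`. -/
noncomputable def eDist (p q : ℝ × ℝ) : ℝ :=
  Real.sqrt ((p.1 - q.1) ^ 2 + (p.2 - q.2) ^ 2)

open WithLp

lemma eDist_eq_dist (p q : ℝ × ℝ) : eDist p q = dist (toLp 2 p) (toLp 2 q) := by
  simp [prod_dist_eq_of_L2, eDist, Real.dist_eq, sq_abs]

lemma eDist_comm (p q : ℝ × ℝ) : eDist p q = eDist q p := by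
  simp only [eDist_eq_dist, dist_comm]

lemma eDist_triangle (p q r : ℝ × ℝ) : eDist p r ≤ eDist p q + eDist q r := by
  simp only [eDist_eq_dist]
  exact dist_triangle _ _ _

lemma convex_setOf_eDist_le (A : ℝ × ℝ) (r : ℝ) : Convex ℝ {p | eDist A p ≤ r} := by
  have := (convex_closedBall (toLp 2 A) r).linear_preimage
    (WithLp.linearEquiv 2 ℝ (ℝ × ℝ)).symm.toLinearMap
  simp only [Set.preimage, Metric.mem_closedBall, LinearEquiv.coe_coe, coe_symm_linearEquiv] at this
  simpa only [eDist_eq_dist, dist_comm (toLp 2 A)] using this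

lemma eDist_corner_le (A B : ℝ × ℝ) : eDist A (B.1, A.2) ≤ eDist A B :=
  Real.sqrt_le_sqrt (by simp [sq_nonneg])

lemma eDist_le_of_mem_slidingTriangle {A B p : ℝ × ℝ} (hp : p ∈ slidingTriangle A B) :
    eDist A p ≤ eDist A B := by
  refine convexHull_min ?_ (convex_setOf_eDist_le A _) hp
  rintro q (rfl | rfl | rfl)
  · simp [eDist]
  · exact Set.mem_ofPred.mpr le_rfl
  · exact eDist_corner_le _ _

theorem stmt_6_general (A B A' B' : ℝ × ℝ) (ε : ℝ)
    (hAA' : 2 * ε < eDist A A')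
    (hAB : eDist A B ≤ ε) (hAB' : eDist A' B' ≤ ε) :
    Disjoint (slidingTriangle A B) (slidingTriangle A' B') := by
  refine Set.disjoint_left.mpr fun p hp hp' => hAA'.not_ge ?_
  calc eDist A A' ≤ eDist A p + eDist A' p := eDist_comm p A' ▸ eDist_triangle A p A'
    _ ≤ ε + ε := add_le_add ((eDist_le_of_mem_slidingTriangle hp).trans hAB)
        ((eDist_le_of_mem_slidingTriangle hp').trans hAB')
    _ = 2 * ε := by ring

/-- If the lower vertices of two up-arcs of mesh at most `ε` are at Euclidean distance
greater than `2ε`, then their sliding triangles are disjoint. -/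
theorem stmt_6 (A B A' B' : ℝ × ℝ) (ε : ℝ)
    (hx : A.1 < B.1) (ht : B.2 < A.2)
    (hx' : A'.1 < B'.1) (ht' : B'.2 < A'.2)
    (hAA' : 2 * ε < eDist A A')
    (hAB : eDist A B ≤ ε) (hAB' : eDist A' B' ≤ ε) :
    Disjoint (slidingTriangle A B) (slidingTriangle A' B') :=
  stmt_6_general A B A' B' ε hAA' hAB hAB'
end
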